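/- arXiv:2411.04621 — 2 statements merged into one kernel-verified Lean document; each statement's English description precedes it below -/
import Mathlib

section
/- Let k ≥ 1, let V be a complex inner product space of dimension k with orthonormal basis (E_1,…,E_k), let R be a Kähler curvature-type tensor on V, and set S_k = Σ_{i,j=1}^k R(E_i,Ē_i,E_j,Ē_j). Let σ denote the rotation-invariant probability measure on the unit sphere of V. Then ∫ [Σ_{j=1}^k R(Z,Z̄,E_j,Ē_j) + R(Z,Z̄,Z,Z̄)] dσ(Z) = ((k+3)/(k(k+1))) · S_k. -/
open MeasureTheory

/-- A Kähler curvature-type tensor on a complex vector space `V`: a map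
`R : V × V × V × V → ℂ` that is `ℂ`-linear in the first and third arguments,
conjugate-linear in the second and fourth arguments, and satisfies the Kähler
symmetries `R(X,Y,Z,W) = R(Z,Y,X,W)`, `R(X,Y,Z,W) = R(X,W,Z,Y)` and
`conj (R(X,Y,Z,W)) = R(Y,X,W,Z)`. -/
structure IsKahlerCurvatureTensor {V : Type*} [AddCommGroup V] [Module ℂ V]
    (R : V → V → V → V → ℂ) : Prop where
  map_add₁ : ∀ x x' y z w, R (x + x') y z w = R x y z w + R x' y z w
  map_smul₁ : ∀ (a : ℂ) (x y z w : V), R (a • x) y z w = a * R x y z w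
  map_add₂ : ∀ x y y' z w, R x (y + y') z w = R x y z w + R x y' z w
  map_smul₂ : ∀ (a : ℂ) (x y z w : V), R x (a • y) z w = starRingEnd ℂ a * R x y z w
  map_add₃ : ∀ x y z z' w, R x y (z + z') w = R x y z w + R x y z' w
  map_smul₃ : ∀ (a : ℂ) (x y z w : V), R x y (a • z) w = a * R x y z w
  map_add₄ : ∀ x y z w w', R x y z (w + w') = R x y z w + R x y z w'
  map_smul₄ : ∀ (a : ℂ) (x y z w : V), R x y z (a • w) = starRingEnd ℂ a * R x y z w
  symm₁₃ : ∀ x y z w, R x y z w = R z y x w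
  symm₂₄ : ∀ x y z w, R x y z w = R x w z y
  conj_symm : ∀ x y z w, starRingEnd ℂ (R x y z w) = R y x w z

/-!
Write `z_a = ⟪E_a, Z⟫`. Expanding `R` in the basis, both integrals become linear combinations
of the moments `∫ z_a z̄_b z_c z̄_d dσ`, and the quadratic moments reduce to these because
`∑_c |z_c|² = 1` on the sphere. Unitary invariance of `σ` pins the quartic moments down:
diagonal phases kill all of them except those with `{a, c} = {b, d}`; a unitary taking `E_a` to
`v / ‖v‖` gives `∫ |⟪v, Z⟫|⁴ = ‖v‖⁴ D` with `D = ∫ |z_a|⁴`; and the four vectors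
`E_a + iᵏ E_b`, of norm `√2`, give `D = 2 ∫ |z_a|² |z_b|²`, because the average over `k` of
`|z_a + iᵏ z_b|⁴` is `|z_a|⁴ + |z_b|⁴ + 4 |z_a|² |z_b|²`. Together with
`∑_{a,c} ∫ |z_a|² |z_c|² = 1` this yields `∫ z_a z̄_b z_c z̄_d = (δ_ab δ_cd + δ_ad δ_cb)/(k(k+1))`
and `∫ z_a z̄_b = δ_ab / k`, so the two terms contribute `S_k / k` and `2 S_k / (k(k+1))`.
-/

open scoped InnerProductSpace ComplexConjugate

theorem Orthonormal.smul_of_norm_eq_one {𝕜 V ι : Type*} [RCLike 𝕜] [NormedAddCommGroup V]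
    [InnerProductSpace 𝕜 V] {v : ι → V} (hv : Orthonormal 𝕜 v) {ε : ι → 𝕜}
    (hε : ∀ i, ‖ε i‖ = 1) : Orthonormal 𝕜 fun i => ε i • v i :=
  ⟨fun i => by rw [norm_smul, hε, hv.1, one_mul], fun i j hij => by
    dsimp only
    rw [inner_smul_left, inner_smul_right, hv.2 hij, mul_zero, mul_zero]⟩

theorem OrthonormalBasis.exists_linearIsometryEquiv_apply_eq {𝕜 V ι : Type*} [RCLike 𝕜]
    [NormedAddCommGroup V] [InnerProductSpace 𝕜 V] [Fintype ι] (E : OrthonormalBasis ι 𝕜 V)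
    {s : Set ι} {v : ι → V} (hv : Orthonormal 𝕜 (s.domRestrict v)) :
    ∃ U : V ≃ₗᵢ[𝕜] V, ∀ i ∈ s, U (E i) = v i := by
  classical
  have : FiniteDimensional 𝕜 V := E.toBasis.finiteDimensional_of_finite
  obtain ⟨b, hb⟩ := hv.exists_orthonormalBasis_extension_of_card_eq
    (Module.finrank_eq_card_basis E.toBasis)
  refine ⟨E.repr.trans b.repr.symm, fun i hi => ?_⟩
  rw [LinearIsometryEquiv.trans_apply, E.repr_self, b.repr_symm_single, hb i hi]

theorem OrthonormalBasis.sum_inner_mul_inner_self {𝕜 V ι : Type*} [RCLike 𝕜]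
    [NormedAddCommGroup V] [InnerProductSpace 𝕜 V] [Fintype ι] (E : OrthonormalBasis ι 𝕜 V)
    (Z : V) : ∑ a, ⟪E a, Z⟫_𝕜 * ⟪Z, E a⟫_𝕜 = (‖Z‖ : 𝕜) ^ 2 := by
  simpa [mul_comm, inner_self_eq_norm_sq_to_K] using E.sum_inner_mul_inner Z Z

theorem sum_range_four_I_pow_quartic (x y x' y' : ℂ) :
    ∑ k ∈ Finset.range 4, (x + conj (Complex.I ^ k) * y) * (x' + Complex.I ^ k * y') *
        (x + conj (Complex.I ^ k) * y) * (x' + Complex.I ^ k * y') =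
      4 * (x * x' * x * x' + y * y' * y * y' + 4 * (x * x' * y * y')) := by
  simp only [Finset.sum_range_succ, Finset.sum_range_zero, pow_zero, pow_one, Complex.I_sq,
    Complex.I_pow_three, map_one, map_neg, Complex.conj_I]
  ring_nf
  rw [Complex.I_sq, Complex.I_pow_four]
  ring

theorem integral_finsetSum_finsetSum {α ι κ F : Type*} [MeasurableSpace α] {μ : Measure α}
    [NormedAddCommGroup F] [NormedSpace ℝ F] (s : Finset ι) (t : Finset κ) {f : ι → κ → α → F}
    (hf : ∀ i j, Integrable (f i j) μ) :
    ∫ x, ∑ i ∈ s, ∑ j ∈ t, f i j x ∂μ = ∑ i ∈ s, ∑ j ∈ t, ∫ x, f i j x ∂μ := by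
  rw [integral_finsetSum _ fun i _ => integrable_finsetSum _ fun j _ => hf i j]
  exact Finset.sum_congr rfl fun i _ => integral_finsetSum _ fun j _ => hf i j

section Sphere

variable {V : Type*} [NormedAddCommGroup V] [MeasurableSpace V] {σ : Measure V}

theorem ae_norm_eq_one (hsupp : σ (Metric.sphere (0 : V) 1)ᶜ = 0) : ∀ᵐ Z ∂σ, ‖Z‖ = 1 := by
  filter_upwards [measure_eq_zero_iff_ae_notMem.mp hsupp] with Z hZ
  simpa using hZ

theorem integrable_of_norm_le_of_ae_norm_eq_one [OpensMeasurableSpace V] [IsFiniteMeasure σ]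
    (hsupp : σ (Metric.sphere (0 : V) 1)ᶜ = 0) {f : V → ℂ} (hf : Continuous f) {C : ℝ}
    (hC : ∀ Z, ‖Z‖ = 1 → ‖f Z‖ ≤ C) : Integrable f σ :=
  (integrable_const C).mono' hf.aestronglyMeasurable
    (by filter_upwards [ae_norm_eq_one hsupp] with Z hZ using hC Z hZ)

end Sphere

section QuarticMoment

variable {V : Type*} [NormedAddCommGroup V] [InnerProductSpace ℂ V] [MeasurableSpace V]
  {σ : Measure V}

variable (σ) in
noncomputable def quarticMoment (u v x y : V) : ℂ :=
  ∫ Z, ⟪u, Z⟫_ℂ * ⟪Z, v⟫_ℂ * ⟪x, Z⟫_ℂ * ⟪Z, y⟫_ℂ ∂σ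

theorem quarticMoment_comm (u v x y : V) :
    quarticMoment σ u v x y = quarticMoment σ u y x v := by
  simp only [quarticMoment]
  congr 1 with Z
  ring

theorem quarticMoment_smul (α β γ δ : ℂ) (u v x y : V) :
    quarticMoment σ (α • u) (β • v) (γ • x) (δ • y) =
      conj α * β * conj γ * δ * quarticMoment σ u v x y := by
  simp only [quarticMoment, inner_smul_left, inner_smul_right, ← integral_const_mul]
  congr 1 with Z
  ring

variable [BorelSpace V]

theorem integrable_inner_mul_inner [IsFiniteMeasure σ]
    (hsupp : σ (Metric.sphere (0 : V) 1)ᶜ = 0) (u v : V) :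
    Integrable (fun Z => ⟪u, Z⟫_ℂ * ⟪Z, v⟫_ℂ) σ := by
  refine integrable_of_norm_le_of_ae_norm_eq_one hsupp (by fun_prop) (C := ‖u‖ * ‖v‖)
    fun Z hZ => ?_
  calc ‖⟪u, Z⟫_ℂ * ⟪Z, v⟫_ℂ‖ ≤ (‖u‖ * ‖Z‖) * (‖Z‖ * ‖v‖) := by
        rw [norm_mul]; gcongr <;> exact norm_inner_le_norm _ _
    _ = ‖u‖ * ‖v‖ := by rw [hZ]; ring

theorem integrable_inner_mul_inner_mul_inner_mul_inner [IsFiniteMeasure σ]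
    (hsupp : σ (Metric.sphere (0 : V) 1)ᶜ = 0) (u v x y : V) :
    Integrable (fun Z => ⟪u, Z⟫_ℂ * ⟪Z, v⟫_ℂ * ⟪x, Z⟫_ℂ * ⟪Z, y⟫_ℂ) σ := by
  refine integrable_of_norm_le_of_ae_norm_eq_one hsupp (by fun_prop)
    (C := ‖u‖ * ‖v‖ * ‖x‖ * ‖y‖) fun Z hZ => ?_
  calc ‖⟪u, Z⟫_ℂ * ⟪Z, v⟫_ℂ * ⟪x, Z⟫_ℂ * ⟪Z, y⟫_ℂ‖
      ≤ (‖u‖ * ‖Z‖) * (‖Z‖ * ‖v‖) * (‖x‖ * ‖Z‖) * (‖Z‖ * ‖y‖) := by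
        simp only [norm_mul]; gcongr <;> exact norm_inner_le_norm _ _
    _ = ‖u‖ * ‖v‖ * ‖x‖ * ‖y‖ := by rw [hZ]; ring

theorem integral_comp_linearIsometryEquiv {F : Type*} [NormedAddCommGroup F] [NormedSpace ℝ F]
    (hinv : ∀ f : V ≃ₗᵢ[ℂ] V, Measure.map f σ = σ) (U : V ≃ₗᵢ[ℂ] V) (g : V → F) :
    ∫ Z, g (U Z) ∂σ = ∫ Z, g Z ∂σ :=
  MeasurePreserving.integral_comp' (f := U.toHomeomorph.toMeasurableEquiv)
    ⟨U.continuous.measurable, hinv U⟩ g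

theorem quarticMoment_map (hinv : ∀ f : V ≃ₗᵢ[ℂ] V, Measure.map f σ = σ) (U : V ≃ₗᵢ[ℂ] V)
    (u v x y : V) : quarticMoment σ (U u) (U v) (U x) (U y) = quarticMoment σ u v x y := by
  have h (Z w : V) : ⟪Z, U w⟫_ℂ = ⟪U.symm Z, w⟫_ℂ := by
    rw [U.symm.inner_map_eq_flip, U.symm_symm]
  simp only [quarticMoment, U.inner_map_eq_flip, h]
  exact integral_comp_linearIsometryEquiv hinv U.symm
    fun Z => ⟪u, Z⟫_ℂ * ⟪Z, v⟫_ℂ * ⟪x, Z⟫_ℂ * ⟪Z, y⟫_ℂ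

theorem sum_quarticMoment_add_I_pow_smul [IsFiniteMeasure σ]
    (hsupp : σ (Metric.sphere (0 : V) 1)ᶜ = 0) (u v : V) :
    ∑ k ∈ Finset.range 4, quarticMoment σ (u + Complex.I ^ k • v) (u + Complex.I ^ k • v)
        (u + Complex.I ^ k • v) (u + Complex.I ^ k • v) =
      4 * (quarticMoment σ u u u u + quarticMoment σ v v v v + 4 * quarticMoment σ u u v v) := by
  have hint := integrable_inner_mul_inner_mul_inner_mul_inner hsupp (σ := σ)
  simp only [quarticMoment]
  rw [← integral_finsetSum _ fun k _ => hint _ _ _ _]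
  simp only [inner_add_left, inner_add_right, inner_smul_left, inner_smul_right,
    sum_range_four_I_pow_quartic]
  rw [integral_const_mul, integral_add, integral_add, integral_const_mul]
  all_goals first
    | exact hint _ _ _ _
    | exact (hint _ _ _ _).const_mul _
    | exact (hint _ _ _ _).add (hint _ _ _ _)

variable {ι : Type*} [Fintype ι] (E : OrthonormalBasis ι ℂ V)

theorem quarticMoment_basis_eq_phase_mul (hinv : ∀ f : V ≃ₗᵢ[ℂ] V, Measure.map f σ = σ)
    {ε : ι → ℂ} (hε : ∀ i, ‖ε i‖ = 1) (a b c d : ι) :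
    quarticMoment σ (E a) (E b) (E c) (E d) =
      conj (ε a) * ε b * conj (ε c) * ε d * quarticMoment σ (E a) (E b) (E c) (E d) := by
  have hF : Orthonormal ℂ ((Set.univ : Set ι).domRestrict fun i => ε i • E i) :=
    (E.orthonormal.smul_of_norm_eq_one hε).comp _ Subtype.val_injective
  obtain ⟨U, hU⟩ := E.exists_linearIsometryEquiv_apply_eq hF
  simp only [Set.mem_univ, forall_const] at hU
  rw [← quarticMoment_smul, ← quarticMoment_map hinv U, hU, hU, hU, hU]

theorem quarticMoment_basis_eq_zero (hinv : ∀ f : V ≃ₗᵢ[ℂ] V, Measure.map f σ = σ)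
    {a b c d : ι} (h : ¬((a = b ∧ c = d) ∨ (a = d ∧ c = b))) :
    quarticMoment σ (E a) (E b) (E c) (E d) = 0 := by
  classical
  by_contra hQ
  -- The phase `i` at the index `t` multiplies the moment by `i ^ (#{a, c = t} - #{b, d = t})`;
  -- the choices `t = a` and `t = c` already force `{a, c} = {b, d}`.
  have hphase (t : ι) := mul_left_eq_self₀.mp (quarticMoment_basis_eq_phase_mul E hinv
    (ε := fun s => if s = t then Complex.I else 1) (fun s => by split_ifs <;> simp) a b c d).symm
  have hac := And.intro (hphase a) (hphase c)
  simp only [hQ, or_false] at hac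
  clear hphase hQ
  apply h
  split_ifs at hac <;> norm_num [Complex.ext_iff] at hac <;> grind

theorem quarticMoment_self (hinv : ∀ f : V ≃ₗᵢ[ℂ] V, Measure.map f σ = σ) (v : V) (a : ι) :
    quarticMoment σ v v v v = ‖v‖ ^ 4 * quarticMoment σ (E a) (E a) (E a) (E a) := by
  rcases eq_or_ne v 0 with rfl | hv
  · simp [quarticMoment]
  set u : V := ((‖v‖⁻¹ : ℝ) : ℂ) • v
  have hu : Orthonormal ℂ (({a} : Set ι).domRestrict fun _ => u) :=
    orthonormal_subsingleton_iff.mpr fun _ => by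
      simp [u, norm_smul, inv_mul_cancel₀ (norm_ne_zero_iff.mpr hv)]
  obtain ⟨U, hU⟩ := E.exists_linearIsometryEquiv_apply_eq hu
  have hvu : v = (‖v‖ : ℂ) • u := by
    rw [smul_smul, ← Complex.ofReal_mul, mul_inv_cancel₀ (norm_ne_zero_iff.mpr hv),
      Complex.ofReal_one, one_smul]
  conv_lhs => rw [hvu]
  rw [quarticMoment_smul, ← hU a rfl, quarticMoment_map hinv, Complex.conj_ofReal]
  ring

theorem quarticMoment_basis_self_eq_two_mul [IsFiniteMeasure σ]
    (hsupp : σ (Metric.sphere (0 : V) 1)ᶜ = 0) (hinv : ∀ f : V ≃ₗᵢ[ℂ] V, Measure.map f σ = σ)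
    {a b : ι} (hab : a ≠ b) :
    quarticMoment σ (E a) (E a) (E a) (E a) = 2 * quarticMoment σ (E a) (E a) (E b) (E b) := by
  have hnorm (k : ℕ) : (‖E a + Complex.I ^ k • E b‖ : ℂ) ^ 4 = 4 := by
    have h2 : ‖E a + Complex.I ^ k • E b‖ ^ 2 = 2 := by
      rw [@norm_add_sq ℂ, inner_smul_right, E.orthonormal.2 hab, norm_smul]
      simp only [E.orthonormal.1 a, E.orthonormal.1 b, norm_pow, Complex.norm_I, one_pow,
        mul_one, mul_zero, RCLike.re_to_complex, Complex.zero_re, add_zero]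
      norm_num
    rw [show (4 : ℂ) = ((2 : ℝ) : ℂ) ^ 2 by norm_num, ← h2]
    push_cast
    ring
  have hsum := sum_quarticMoment_add_I_pow_smul hsupp (σ := σ) (E a) (E b)
  rw [Finset.sum_congr rfl fun k _ => quarticMoment_self E hinv _ a,
    quarticMoment_self E hinv (E b) a] at hsum
  simp only [hnorm, E.orthonormal.1 b, Complex.ofReal_one, one_pow, one_mul, Finset.sum_const,
    Finset.card_range, nsmul_eq_mul] at hsum
  linear_combination hsum / 8

theorem integral_inner_mul_inner_eq_sum_quarticMoment [IsFiniteMeasure σ]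
    (hsupp : σ (Metric.sphere (0 : V) 1)ᶜ = 0) (u v : V) :
    ∫ Z, ⟪u, Z⟫_ℂ * ⟪Z, v⟫_ℂ ∂σ = ∑ c, quarticMoment σ u v (E c) (E c) := by
  simp only [quarticMoment]
  rw [← integral_finsetSum _ fun c _ =>
    integrable_inner_mul_inner_mul_inner_mul_inner hsupp _ _ _ _]
  refine integral_congr_ae ?_
  filter_upwards [ae_norm_eq_one hsupp] with Z hZ
  simp only [mul_assoc, ← Finset.mul_sum]
  simp [E.sum_inner_mul_inner_self, hZ]

theorem sum_integral_inner_mul_inner_self [IsProbabilityMeasure σ]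
    (hsupp : σ (Metric.sphere (0 : V) 1)ᶜ = 0) :
    ∑ a, ∫ Z, ⟪E a, Z⟫_ℂ * ⟪Z, E a⟫_ℂ ∂σ = 1 := by
  rw [← integral_finsetSum _ fun a _ => integrable_inner_mul_inner hsupp _ _]
  have h : (fun Z => ∑ a, ⟪E a, Z⟫_ℂ * ⟪Z, E a⟫_ℂ) =ᵐ[σ] fun _ => 1 := by
    filter_upwards [ae_norm_eq_one hsupp] with Z hZ
    simp [E.sum_inner_mul_inner_self, hZ]
  simp [integral_congr_ae h]

theorem sum_quarticMoment_basis [IsProbabilityMeasure σ]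
    (hsupp : σ (Metric.sphere (0 : V) 1)ᶜ = 0) :
    ∑ a, ∑ c, quarticMoment σ (E a) (E a) (E c) (E c) = 1 := by
  simp_rw [← integral_inner_mul_inner_eq_sum_quarticMoment E hsupp]
  exact sum_integral_inner_mul_inner_self E hsupp

variable [DecidableEq ι]

theorem quarticMoment_basis_pair [IsProbabilityMeasure σ]
    (hsupp : σ (Metric.sphere (0 : V) 1)ᶜ = 0) (hinv : ∀ f : V ≃ₗᵢ[ℂ] V, Measure.map f σ = σ)
    (a c : ι) :
    quarticMoment σ (E a) (E a) (E c) (E c) =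
      (1 + if a = c then 1 else 0) * ((Fintype.card ι : ℂ) * (Fintype.card ι + 1))⁻¹ := by
  have hsum := sum_quarticMoment_basis E hsupp
  obtain ⟨a₀⟩ : Nonempty ι := by
    by_contra h
    simp [not_nonempty_iff.mp h] at hsum
  set D := quarticMoment σ (E a₀) (E a₀) (E a₀) (E a₀)
  have hdiag (a : ι) : quarticMoment σ (E a) (E a) (E a) (E a) = D := by
    simp [quarticMoment_self E hinv (E a) a₀, E.orthonormal.1 a, D]
  have hpair (a c : ι) :
      quarticMoment σ (E a) (E a) (E c) (E c) = (1 + if a = c then 1 else 0) * (D / 2) := by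
    split_ifs with h
    · rw [h, hdiag]; ring
    · have h2 := quarticMoment_basis_self_eq_two_mul E hsupp hinv h
      rw [hdiag] at h2
      linear_combination (-1 / 2 : ℂ) * h2
  have hD : D / 2 = ((Fintype.card ι : ℂ) * (Fintype.card ι + 1))⁻¹ := by
    refine eq_inv_of_mul_eq_one_left ?_
    simp only [hpair, add_mul, Finset.sum_add_distrib, one_mul, ite_mul, zero_mul,
      Finset.sum_ite_eq, Finset.mem_univ, if_true, Finset.sum_const, Finset.card_univ,
      nsmul_eq_mul] at hsum
    linear_combination hsum
  rw [hpair, hD]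

theorem quarticMoment_basis [IsProbabilityMeasure σ]
    (hsupp : σ (Metric.sphere (0 : V) 1)ᶜ = 0) (hinv : ∀ f : V ≃ₗᵢ[ℂ] V, Measure.map f σ = σ)
    (a b c d : ι) :
    quarticMoment σ (E a) (E b) (E c) (E d) =
      ((if a = b then 1 else 0) * (if c = d then 1 else 0) +
        (if a = d then 1 else 0) * (if c = b then 1 else 0)) *
        ((Fintype.card ι : ℂ) * (Fintype.card ι + 1))⁻¹ := by
  by_cases h : (a = b ∧ c = d) ∨ (a = d ∧ c = b)
  · rcases h with ⟨rfl, rfl⟩ | ⟨rfl, rfl⟩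
    · rw [quarticMoment_basis_pair E hsupp hinv]
      simp [eq_comm]
    · rw [quarticMoment_comm, quarticMoment_basis_pair E hsupp hinv]
      by_cases h : a = c <;> simp [h, eq_comm]
  · rw [quarticMoment_basis_eq_zero E hinv h]
    push Not at h
    split_ifs <;> simp_all

theorem integral_inner_basis_mul_inner_basis [IsProbabilityMeasure σ]
    (hsupp : σ (Metric.sphere (0 : V) 1)ᶜ = 0) (hinv : ∀ f : V ≃ₗᵢ[ℂ] V, Measure.map f σ = σ)
    (a b : ι) :
    ∫ Z, ⟪E a, Z⟫_ℂ * ⟪Z, E b⟫_ℂ ∂σ = if a = b then (Fintype.card ι : ℂ)⁻¹ else 0 := by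
  rw [integral_inner_mul_inner_eq_sum_quarticMoment E hsupp]
  simp only [quarticMoment_basis E hsupp hinv]
  split_ifs with h
  · subst h
    simp only [mul_one, mul_ite, mul_zero, mul_inv_rev, ← Finset.sum_mul, Finset.sum_add_distrib,
      Finset.sum_const, Finset.card_univ, nsmul_eq_mul, Finset.sum_ite_eq', Finset.mem_univ,
      if_true]
    rw [← mul_assoc, mul_inv_cancel₀ (Nat.cast_add_one_ne_zero _), one_mul]
  · simp [h]

end QuarticMoment

namespace IsKahlerCurvatureTensor

variable {V : Type*} [NormedAddCommGroup V] [InnerProductSpace ℂ V] {R : V → V → V → V → ℂ}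

theorem apply_swap_pairs (hR : IsKahlerCurvatureTensor R) (x y z w : V) :
    R x y z w = R z w x y := by
  rw [hR.symm₁₃, hR.symm₂₄]

theorem map_sum₁ (hR : IsKahlerCurvatureTensor R) {ι : Type*} (s : Finset ι) (f : ι → V)
    (y z w : V) : R (∑ i ∈ s, f i) y z w = ∑ i ∈ s, R (f i) y z w :=
  map_sum (AddMonoidHom.mk' (R · y z w) fun x x' => hR.map_add₁ x x' y z w) f s

theorem map_sum₂ (hR : IsKahlerCurvatureTensor R) {ι : Type*} (s : Finset ι) (f : ι → V)
    (x z w : V) : R x (∑ i ∈ s, f i) z w = ∑ i ∈ s, R x (f i) z w :=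
  map_sum (AddMonoidHom.mk' (R x · z w) fun y y' => hR.map_add₂ x y y' z w) f s

variable {ι : Type*} [Fintype ι]

theorem apply_self_self_left_eq_sum (hR : IsKahlerCurvatureTensor R)
    (E : OrthonormalBasis ι ℂ V) (Z x y : V) :
    R Z Z x y = ∑ a, ∑ b, ⟪E a, Z⟫_ℂ * ⟪Z, E b⟫_ℂ * R (E a) (E b) x y := by
  conv_lhs => rw [← E.sum_repr' Z]
  rw [hR.map_sum₁]
  refine Finset.sum_congr rfl fun a _ => ?_
  rw [hR.map_smul₁, hR.map_sum₂, Finset.mul_sum]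
  refine Finset.sum_congr rfl fun b _ => ?_
  rw [hR.map_smul₂, inner_conj_symm]
  ring

theorem apply_self_eq_sum (hR : IsKahlerCurvatureTensor R) (E : OrthonormalBasis ι ℂ V)
    (Z : V) :
    R Z Z Z Z = ∑ a, ∑ b, ∑ c, ∑ d,
      ⟪E a, Z⟫_ℂ * ⟪Z, E b⟫_ℂ * ⟪E c, Z⟫_ℂ * ⟪Z, E d⟫_ℂ * R (E a) (E b) (E c) (E d) := by
  rw [hR.apply_self_self_left_eq_sum E]
  refine Finset.sum_congr rfl fun a _ => Finset.sum_congr rfl fun b _ => ?_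
  rw [hR.apply_swap_pairs, hR.apply_self_self_left_eq_sum E, Finset.mul_sum]
  refine Finset.sum_congr rfl fun c _ => ?_
  rw [Finset.mul_sum]
  refine Finset.sum_congr rfl fun d _ => ?_
  rw [hR.apply_swap_pairs (E c)]
  ring

variable [MeasurableSpace V] [BorelSpace V] {σ : Measure V} [IsProbabilityMeasure σ]

theorem integrable_apply_self_self_left (hR : IsKahlerCurvatureTensor R)
    (E : OrthonormalBasis ι ℂ V) (hsupp : σ (Metric.sphere (0 : V) 1)ᶜ = 0) (x y : V) :
    Integrable (fun Z => R Z Z x y) σ := by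
  simp_rw [hR.apply_self_self_left_eq_sum E]
  exact integrable_finsetSum _ fun a _ => integrable_finsetSum _ fun b _ =>
    (integrable_inner_mul_inner hsupp _ _).mul_const _

theorem integrable_apply_self (hR : IsKahlerCurvatureTensor R) (E : OrthonormalBasis ι ℂ V)
    (hsupp : σ (Metric.sphere (0 : V) 1)ᶜ = 0) : Integrable (fun Z => R Z Z Z Z) σ := by
  simp_rw [hR.apply_self_eq_sum E]
  exact integrable_finsetSum _ fun a _ => integrable_finsetSum _ fun b _ =>
    integrable_finsetSum _ fun c _ => integrable_finsetSum _ fun d _ =>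
      (integrable_inner_mul_inner_mul_inner_mul_inner hsupp _ _ _ _).mul_const _

variable [DecidableEq ι]

theorem integral_apply_self_self_left (hR : IsKahlerCurvatureTensor R)
    (E : OrthonormalBasis ι ℂ V) (hsupp : σ (Metric.sphere (0 : V) 1)ᶜ = 0)
    (hinv : ∀ f : V ≃ₗᵢ[ℂ] V, Measure.map f σ = σ) (x y : V) :
    ∫ Z, R Z Z x y ∂σ = (Fintype.card ι : ℂ)⁻¹ * ∑ a, R (E a) (E a) x y := by
  conv_lhs => enter [2, Z]; rw [hR.apply_self_self_left_eq_sum E]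
  rw [integral_finsetSum_finsetSum _ _ fun a b =>
    (integrable_inner_mul_inner hsupp _ _).mul_const _]
  simp only [integral_mul_const, integral_inner_basis_mul_inner_basis E hsupp hinv, ite_mul,
    zero_mul, Finset.sum_ite_eq, Finset.mem_univ, if_true, Finset.mul_sum]

theorem integral_apply_self (hR : IsKahlerCurvatureTensor R) (E : OrthonormalBasis ι ℂ V)
    (hsupp : σ (Metric.sphere (0 : V) 1)ᶜ = 0) (hinv : ∀ f : V ≃ₗᵢ[ℂ] V, Measure.map f σ = σ) :
    ∫ Z, R Z Z Z Z ∂σ = 2 * ((Fintype.card ι : ℂ) * (Fintype.card ι + 1))⁻¹ *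
      ∑ a, ∑ c, R (E a) (E a) (E c) (E c) := by
  have hint := integrable_inner_mul_inner_mul_inner_mul_inner hsupp (σ := σ)
  have hQ (a b c d : ι) : ∫ Z, ⟪E a, Z⟫_ℂ * ⟪Z, E b⟫_ℂ * ⟪E c, Z⟫_ℂ * ⟪Z, E d⟫_ℂ ∂σ = _ :=
    quarticMoment_basis E hsupp hinv a b c d
  conv_lhs => enter [2, Z]; rw [hR.apply_self_eq_sum E]
  rw [integral_finsetSum_finsetSum _ _ fun a b => integrable_finsetSum _ fun c _ =>
    integrable_finsetSum _ fun d _ => (hint _ _ _ _).mul_const _]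
  refine (Finset.sum_congr rfl fun a _ => Finset.sum_congr rfl fun b _ =>
    integral_finsetSum_finsetSum _ _ fun c d => (hint _ _ _ _).mul_const _).trans ?_
  simp only [integral_mul_const, hQ, add_mul, ite_mul, one_mul, zero_mul, Finset.sum_add_distrib,
    Finset.sum_ite_irrel, Finset.sum_const_zero, Finset.sum_ite_eq, Finset.sum_ite_eq',
    Finset.mem_univ, if_true, ← Finset.mul_sum]
  have hswap : ∑ a, ∑ b, R (E a) (E b) (E b) (E a) = ∑ a, ∑ c, R (E a) (E a) (E c) (E c) := by
    rw [Finset.sum_comm]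
    exact Finset.sum_congr rfl fun c _ => Finset.sum_congr rfl fun a _ => hR.symm₁₃ _ _ _ _
  rw [hswap]
  ring

end IsKahlerCurvatureTensor

theorem average_Ric_k_plus_general
    {V : Type*} [NormedAddCommGroup V] [InnerProductSpace ℂ V]
    [MeasurableSpace V] [BorelSpace V]
    (k : ℕ) (E : OrthonormalBasis (Fin k) ℂ V)
    (R : V → V → V → V → ℂ) (hR : IsKahlerCurvatureTensor R)
    (σ : Measure V) [IsProbabilityMeasure σ]
    (hsupp : σ (Metric.sphere (0 : V) 1)ᶜ = 0)
    (hinv : ∀ f : V ≃ₗᵢ[ℂ] V, Measure.map f σ = σ) :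
    ∫ Z, ((∑ j : Fin k, R Z Z (E j) (E j)) + R Z Z Z Z) ∂σ =
      (((k : ℂ) + 3) / (k * (k + 1))) * ∑ i : Fin k, ∑ j : Fin k,
        R (E i) (E i) (E j) (E j) := by
  rw [integral_add (integrable_finsetSum _ fun j _ =>
      hR.integrable_apply_self_self_left E hsupp _ _) (hR.integrable_apply_self E hsupp),
    integral_finsetSum _ fun j _ => hR.integrable_apply_self_self_left E hsupp _ _]
  simp only [hR.integral_apply_self_self_left E hsupp hinv, hR.integral_apply_self E hsupp hinv,
    Fintype.card_fin, ← Finset.mul_sum]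
  rw [Finset.sum_comm]
  rcases eq_or_ne (k : ℂ) 0 with hk | hk
  · simp [hk]
  · field_simp
    ring

/-- **Sphere average of `Ric_k^+`.** Let `V` be a `k`-dimensional complex inner
product space (`k ≥ 1`) with orthonormal basis `E`, let `R` be a Kähler
curvature-type tensor on `V`, let `S_k = Σ_{i,j} R(E_i,Ē_i,E_j,Ē_j)`, and let `σ`
be the rotation-invariant probability measure on the unit sphere of `V`. Then
`∫ [Σ_j R(Z,Z̄,E_j,Ē_j) + R(Z,Z̄,Z,Z̄)] dσ(Z) = ((k+3)/(k(k+1))) · S_k`. -/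
theorem average_Ric_k_plus
    {V : Type*} [NormedAddCommGroup V] [InnerProductSpace ℂ V]
    [MeasurableSpace V] [BorelSpace V]
    (k : ℕ) (hk : 1 ≤ k) (E : OrthonormalBasis (Fin k) ℂ V)
    (R : V → V → V → V → ℂ) (hR : IsKahlerCurvatureTensor R)
    (σ : Measure V) [IsProbabilityMeasure σ]
    (hsupp : σ (Metric.sphere (0 : V) 1)ᶜ = 0)
    (hinv : ∀ f : V ≃ₗᵢ[ℂ] V, Measure.map f σ = σ) :
    ∫ Z, ((∑ j : Fin k, R Z Z (E j) (E j)) + R Z Z Z Z) ∂σ =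
      (((k : ℂ) + 3) / (k * (k + 1))) * ∑ i : Fin k, ∑ j : Fin k,
        R (E i) (E i) (E j) (E j) :=
  average_Ric_k_plus_general k E R hR σ hsupp hinv
end

section
/- Let V be a complex inner product space of dimension n ≥ 3 with orthonormal basis (e_1,…,e_n), let R be a Kähler curvature-type tensor on V, and let φ ∈ ℝ. Assume that for every complex 3-dimensional subspace Σ ⊆ V, every orthonormal basis (E_1,E_2,E_3) of Σ, and every unit vector v ∈ Σ one has Σ_{j=1}^3 R(v,v̄,E_j,Ē_j) − R(v,v̄,v,v̄) ≥ φ. Define Ric(e_i,ē_i) = Σ_{j=1}^n R(e_i,ē_i,e_j,ē_j). Then (n−5)·Σ_{i,j=1}^2 R_{i ī j j̄} + 3·(Ric(e_1,ē_1) + Ric(e_2,ē_2)) ≥ 6(n−2)φ. -/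
/-!
Fix an orthonormal triple `E₀, E₁, E_l`. The bound `Ric_3^⊥ ≥ φ` at `E₀` and `E₁` gives
`R_{00̄11̄} + R_{00̄ll̄} ≥ φ` and `R_{11̄00̄} + R_{11̄ll̄} ≥ φ`; at the unit vectors
`(E₀ + ζ E₁)/√2` with `ζ⁴ = 1`, averaged over `ζ`, it gives
`R_{00̄00̄} + R_{11̄11̄} + 2 (R_{00̄ll̄} + R_{11̄ll̄}) ≥ 4φ`, because the average kills all mixed terms.
Together, `Σ_{i,j ≤ 1} R_{iījj̄} + 3 (R_{00̄ll̄} + R_{11̄ll̄}) ≥ 6φ`, and summing over the `n - 2`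
indices `l ≠ 0, 1` gives the estimate.
-/

open MeasureTheory

section

open Complex ComplexConjugate

namespace IsKahlerCurvatureTensor

variable {V : Type*} [AddCommGroup V] [Module ℂ V] {R : V → V → V → V → ℂ}

theorem apply_zero_left (hR : IsKahlerCurvatureTensor R) (y z w : V) : R 0 y z w = 0 := by
  simpa using hR.map_smul₁ 0 0 y z w

theorem apply_self_self_comm (hR : IsKahlerCurvatureTensor R) (x y : V) :
    R x x y y = R y y x x :=
  (hR.symm₁₃ x x y y).trans (hR.symm₂₄ y x x y)

theorem apply_smul_smul_left (hR : IsKahlerCurvatureTensor R) (c : ℂ) (x z w : V) :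
    R (c • x) (c • x) z w = normSq c * R x x z w := by
  rw [hR.map_smul₁, hR.map_smul₂, normSq_eq_conj_mul_self]; ring

theorem apply_smul_self (hR : IsKahlerCurvatureTensor R) (c : ℂ) (x : V) :
    R (c • x) (c • x) (c • x) (c • x) = normSq c ^ 2 * R x x x x := by
  rw [hR.apply_smul_smul_left, hR.map_smul₃, hR.map_smul₄, normSq_eq_conj_mul_self]; ring

theorem apply_add_smul_left (hR : IsKahlerCurvatureTensor R) (ζ : ℂ) (x y z w : V) :
    R (x + ζ • y) (x + ζ • y) z w =
      R x x z w + conj ζ * R x y z w + ζ * R y x z w + ζ * conj ζ * R y y z w := by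
  simp only [hR.map_add₁, hR.map_add₂, hR.map_smul₁, hR.map_smul₂]; ring

theorem apply_add_smul_right (hR : IsKahlerCurvatureTensor R) (ζ : ℂ) (x y z w : V) :
    R x y (z + ζ • w) (z + ζ • w) =
      R x y z z + conj ζ * R x y z w + ζ * R x y w z + ζ * conj ζ * R x y w w := by
  simp only [hR.map_add₃, hR.map_add₄, hR.map_smul₃, hR.map_smul₄]; ring

/-- Summing over the fourth roots of unity `ζ` kills every term of the expansion of
`R (x + ζ • y) …` whose coefficient is a nontrivial power of `ζ`. -/
theorem phase_sum_left (hR : IsKahlerCurvatureTensor R) (x y z w : V) :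
    R (x + y) (x + y) z w + R (x + (-1 : ℂ) • y) (x + (-1 : ℂ) • y) z w
      + R (x + I • y) (x + I • y) z w + R (x + (-I) • y) (x + (-I) • y) z w
      = 4 * (R x x z w + R y y z w) := by
  rw [show x + y = x + (1 : ℂ) • y by rw [one_smul]]
  simp only [hR.apply_add_smul_left, map_one, map_neg, conj_I]
  linear_combination (-2 * R y y z w) * I_sq

theorem phase_sum_self (hR : IsKahlerCurvatureTensor R) (x y : V) :
    R (x + y) (x + y) (x + y) (x + y)
      + R (x + (-1 : ℂ) • y) (x + (-1 : ℂ) • y) (x + (-1 : ℂ) • y) (x + (-1 : ℂ) • y)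
      + R (x + I • y) (x + I • y) (x + I • y) (x + I • y)
      + R (x + (-I) • y) (x + (-I) • y) (x + (-I) • y) (x + (-I) • y)
      = 4 * (R x x x x + R y y y y + 4 * R x x y y) := by
  have hyx : R y x x y = R x x y y := (hR.symm₁₃ x x y y).symm
  have hxy : R x y y x = R x x y y := (hR.symm₁₃ x y y x).trans (hR.apply_self_self_comm y x)
  have hyy : R y y x x = R x x y y := hR.apply_self_self_comm y x
  rw [show x + y = x + (1 : ℂ) • y by rw [one_smul]]
  simp only [hR.apply_add_smul_left, hR.apply_add_smul_right, map_one, map_neg, conj_I,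
    hyx, hxy, hyy]
  ring_nf
  simp only [I_sq, I_pow_four]
  ring

end IsKahlerCurvatureTensor

variable {V : Type*} [NormedAddCommGroup V] [InnerProductSpace ℂ V] {R : V → V → V → V → ℂ}
  {φ : ℝ}

/-- The paper's `Ric_3^⊥ ≥ φ`. -/
def RicPerpGe (R : V → V → V → V → ℂ) (φ : ℝ) : Prop :=
  ∀ K : Submodule ℂ V, Module.finrank ℂ K = 3 →
    ∀ E : Fin 3 → V, Orthonormal ℂ E → (∀ j, E j ∈ K) →
    ∀ v ∈ K, ‖v‖ = 1 → φ ≤ ((∑ j : Fin 3, R v v (E j) (E j)) - R v v v v).re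

namespace RicPerpGe

theorem le_of_mem_span (h : RicPerpGe R φ) (hR : IsKahlerCurvatureTensor R) {E : Fin 3 → V}
    (hE : Orthonormal ℂ E) {u : V} (hu : u ∈ Submodule.span ℂ (Set.range E)) :
    φ * ‖u‖ ^ 4 ≤ ‖u‖ ^ 2 * (∑ j, R u u (E j) (E j)).re - (R u u u u).re := by
  rcases eq_or_ne u 0 with rfl | hu0
  · simp [hR.apply_zero_left]
  have hK : Module.finrank ℂ (Submodule.span ℂ (Set.range E)) = 3 := by
    rw [finrank_span_eq_card hE.linearIndependent, Fintype.card_fin]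
  set c : ℂ := ((‖u‖⁻¹ : ℝ) : ℂ)
  have hc : normSq c = (‖u‖ ^ 2)⁻¹ := by simp [c, normSq_ofReal, sq]
  have hv := h _ hK E hE (fun j ↦ Submodule.subset_span ⟨j, rfl⟩) (c • u)
    (Submodule.smul_mem _ c hu) (by simp [c, norm_smul, hu0])
  rw [hR.apply_smul_self] at hv
  simp only [hR.apply_smul_smul_left, ← Finset.mul_sum, hc, ← ofReal_pow, sub_re,
    re_ofReal_mul] at hv
  have := mul_le_mul_of_nonneg_left hv (sq_nonneg (‖u‖ ^ 2))
  field_simp at this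
  linear_combination this

theorem norm_add_smul_sq {E : Fin 3 → V} (hE : Orthonormal ℂ E) {ζ : ℂ} (hζ : ‖ζ‖ = 1) :
    ‖E 0 + ζ • E 1‖ ^ 2 = 2 := by
  rw [norm_add_sq (𝕜 := ℂ), inner_smul_right, hE.2 (by decide), norm_smul, hζ, hE.1 0, hE.1 1]
  norm_num

/-- Apply the bound to the four vectors `E 0 + ζ • E 1`, `ζ⁴ = 1`, of squared norm `2`: in the
sum of the four bounds the mixed terms cancel. -/
theorem four_mul_le (h : RicPerpGe R φ) (hR : IsKahlerCurvatureTensor R) {E : Fin 3 → V}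
    (hE : Orthonormal ℂ E) :
    4 * φ ≤ (R (E 0) (E 0) (E 0) (E 0)).re + (R (E 1) (E 1) (E 1) (E 1)).re
      + 2 * ((R (E 0) (E 0) (E 2) (E 2)).re + (R (E 1) (E 1) (E 2) (E 2)).re) := by
  set F : ℂ → ℂ := fun ζ ↦ 2 * ∑ j, R (E 0 + ζ • E 1) (E 0 + ζ • E 1) (E j) (E j)
    - R (E 0 + ζ • E 1) (E 0 + ζ • E 1) (E 0 + ζ • E 1) (E 0 + ζ • E 1) with hF
  have hphase : ∀ ζ : ℂ, ‖ζ‖ = 1 → 4 * φ ≤ (F ζ).re := by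
    intro ζ hζ
    have hmem : E 0 + ζ • E 1 ∈ Submodule.span ℂ (Set.range E) :=
      Submodule.add_mem _ (Submodule.subset_span ⟨0, rfl⟩)
        (Submodule.smul_mem _ ζ (Submodule.subset_span ⟨1, rfl⟩))
    have := h.le_of_mem_span hR hE hmem
    rw [show ‖E 0 + ζ • E 1‖ ^ 4 = (‖E 0 + ζ • E 1‖ ^ 2) ^ 2 by ring,
      norm_add_smul_sq hE hζ] at this
    simp only [hF, sub_re, mul_re, re_ofNat, im_ofNat, zero_mul, sub_zero]
    linarith
  have hsum : F 1 + F (-1) + F I + F (-I) = 4 * (R (E 0) (E 0) (E 0) (E 0)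
      + R (E 1) (E 1) (E 1) (E 1) + 2 * R (E 0) (E 0) (E 2) (E 2)
      + 2 * R (E 1) (E 1) (E 2) (E 2)) := by
    simp only [hF, one_smul, Fin.sum_univ_three]
    linear_combination 2 * (hR.phase_sum_left (E 0) (E 1) (E 0) (E 0)
      + hR.phase_sum_left (E 0) (E 1) (E 1) (E 1) + hR.phase_sum_left (E 0) (E 1) (E 2) (E 2))
      - hR.phase_sum_self (E 0) (E 1) + 8 * hR.apply_self_self_comm (E 1) (E 0)
  have hsum_re := congrArg re hsum
  simp only [add_re, mul_re, re_ofNat, im_ofNat, zero_mul, sub_zero] at hsum_re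
  linarith [hphase 1 (by simp), hphase (-1) (by simp), hphase I (by simp), hphase (-I) (by simp)]

theorem six_mul_le (h : RicPerpGe R φ) (hR : IsKahlerCurvatureTensor R) {E : Fin 3 → V}
    (hE : Orthonormal ℂ E) :
    6 * φ ≤ (R (E 0) (E 0) (E 0) (E 0) + R (E 0) (E 0) (E 1) (E 1)
      + R (E 1) (E 1) (E 0) (E 0) + R (E 1) (E 1) (E 1) (E 1)).re
      + 3 * ((R (E 0) (E 0) (E 2) (E 2)).re + (R (E 1) (E 1) (E 2) (E 2)).re) := by
  have hunit : ∀ i, φ ≤ (∑ j, R (E i) (E i) (E j) (E j)).re - (R (E i) (E i) (E i) (E i)).re :=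
    fun i ↦ by simpa [hE.1 i] using h.le_of_mem_span hR hE (Submodule.subset_span ⟨i, rfl⟩)
  have h0 := hunit 0
  have h1 := hunit 1
  simp only [Fin.sum_univ_three, add_re] at h0 h1 ⊢
  linarith [h.four_mul_le hR hE]

theorem sum_estimate (h : RicPerpGe R φ) (hR : IsKahlerCurvatureTensor R) {ι : Type*}
    [Fintype ι] [DecidableEq ι] {e : ι → V} (he : Orthonormal ℂ e) {i j : ι} (hij : i ≠ j) :
    6 * ((Fintype.card ι : ℝ) - 2) * φ ≤
      ((Fintype.card ι : ℝ) - 5) *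
        (R (e i) (e i) (e i) (e i) + R (e i) (e i) (e j) (e j)
          + R (e j) (e j) (e i) (e i) + R (e j) (e j) (e j) (e j)).re
      + 3 * ((∑ k, R (e i) (e i) (e k) (e k)).re + (∑ k, R (e j) (e j) (e k) (e k)).re) := by
  set S := (Finset.univ.erase i).erase j with hS
  have hj : j ∈ Finset.univ.erase i := Finset.mem_erase.mpr ⟨hij.symm, Finset.mem_univ j⟩
  have hcard : (S.card : ℝ) = Fintype.card ι - 2 := by
    rw [Finset.card_erase_of_mem hj, Finset.card_erase_of_mem (Finset.mem_univ i),
      Finset.card_univ, Nat.sub_sub, Nat.cast_sub]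
    · norm_num
    · exact Fintype.one_lt_card_iff.mpr ⟨i, j, hij⟩
  have hsplit : ∀ x, ∑ k, R x x (e k) (e k) = R x x (e i) (e i) + R x x (e j) (e j)
      + ∑ k ∈ S, R x x (e k) (e k) := fun x ↦ by
    rw [add_assoc, hS, Finset.add_sum_erase _ (fun k ↦ R x x (e k) (e k)) hj,
      Finset.add_sum_erase _ (fun k ↦ R x x (e k) (e k)) (Finset.mem_univ i)]
  have htriple : ∀ k ∈ S, 6 * φ ≤ (R (e i) (e i) (e i) (e i) + R (e i) (e i) (e j) (e j)
      + R (e j) (e j) (e i) (e i) + R (e j) (e j) (e j) (e j)).re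
      + 3 * ((R (e i) (e i) (e k) (e k)).re + (R (e j) (e j) (e k) (e k)).re) := by
    intro k hk
    obtain ⟨hkj, hki⟩ : k ≠ j ∧ k ≠ i := by simpa [S] using hk
    have hinj : Function.Injective ![i, j, k] :=
      Fin.cons_injective_iff.mpr ⟨by simp [hij, hki.symm], injective_pair_iff_ne.mpr hkj.symm⟩
    exact h.six_mul_le hR (he.comp _ hinj)
  have hsum := Finset.sum_le_sum htriple
  rw [Finset.sum_const, nsmul_eq_mul, hcard, Finset.sum_add_distrib, Finset.sum_const,
    nsmul_eq_mul, hcard, ← Finset.mul_sum, Finset.sum_add_distrib] at hsum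
  rw [hsplit, hsplit]
  simp only [add_re, re_sum] at hsum ⊢
  linarith

end RicPerpGe

end

/-- **The curvature estimate used in (eq:Ric5) in the proof of Theorem 1.** Let `V`
be a complex inner product space of dimension `n ≥ 3` with orthonormal basis
`(e₁, …, e_n)`, `R` a Kähler curvature-type tensor and `φ ∈ ℝ`. If `Ric_3^⊥ ≥ φ`
pointwise, then with `Ric(e_i, ē_i) = Σ_j R(e_i, ē_i, e_j, ē_j)`,
`(n − 5)·Σ_{i,j=1}^2 R_{iījj̄} + 3(Ric(e₁,ē₁) + Ric(e₂,ē₂)) ≥ 6(n − 2)φ`. -/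
theorem Ric5_curvature_estimate
    {V : Type*} [NormedAddCommGroup V] [InnerProductSpace ℂ V]
    (n : ℕ) (hn : 3 ≤ n) (e : OrthonormalBasis (Fin n) ℂ V)
    (R : V → V → V → V → ℂ) (hR : IsKahlerCurvatureTensor R) (φ : ℝ)
    (hRic : ∀ K : Submodule ℂ V, Module.finrank ℂ K = 3 →
      ∀ E : Fin 3 → V, Orthonormal ℂ E → (∀ j, E j ∈ K) →
      ∀ v ∈ K, ‖v‖ = 1 →
        φ ≤ ((∑ j : Fin 3, R v v (E j) (E j)) - R v v v v).re) :
    6 * ((n : ℝ) - 2) * φ ≤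
      ((n : ℝ) - 5) *
        (R (e ⟨0, by omega⟩) (e ⟨0, by omega⟩) (e ⟨0, by omega⟩) (e ⟨0, by omega⟩)
          + R (e ⟨0, by omega⟩) (e ⟨0, by omega⟩) (e ⟨1, by omega⟩) (e ⟨1, by omega⟩)
          + R (e ⟨1, by omega⟩) (e ⟨1, by omega⟩) (e ⟨0, by omega⟩) (e ⟨0, by omega⟩)
          + R (e ⟨1, by omega⟩) (e ⟨1, by omega⟩) (e ⟨1, by omega⟩) (e ⟨1, by omega⟩)).re
      + 3 * ((∑ j : Fin n, R (e ⟨0, by omega⟩) (e ⟨0, by omega⟩) (e j) (e j)).re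
          + (∑ j : Fin n, R (e ⟨1, by omega⟩) (e ⟨1, by omega⟩) (e j) (e j)).re) := by
  have h : RicPerpGe R φ := hRic
  simpa using h.sum_estimate hR e.orthonormal (i := ⟨0, by omega⟩) (j := ⟨1, by omega⟩) (by simp)
end
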